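/- arXiv:2106.05464 — 2 statements merged into one kernel-verified Lean document; each statement's English description precedes it below -/
import Mathlib

section
/- Let M be a von Neumann algebra, H a Hilbert M-bimodule, and suppose the n-tuples of unit vectors (ξ_1,…,ξ_n) and (η_1,…,η_n) in H are almost δ-related. Then for every ε > 0 there exist a_1,…,a_p ∈ M such that for all 1 ≤ k ≤ n: ‖(1 − Σ_j a_j*a_j)ξ_k‖ < 2ε, ‖(1 − Σ_j a_j*a_j)η_k‖ < 2ε, ‖ξ_k(1 − Σ_j a_j*a_j)‖ < 2ε, ‖η_k(1 − Σ_j a_j*a_j)‖ < 2ε, ‖(1 − Σ_j a_j a_j*)ξ_k‖ < 2ε, ‖(1 − Σ_j a_j a_j*)η_k‖ < 2ε, ‖ξ_k(1 − Σ_j a_j a_j*)‖ < 2ε, ‖η_k(1 − Σ_j a_j a_j*)‖ < 2ε, Σ_j ‖a_j ξ_k − η_k a_j‖² < δ, Σ_j ‖a_j* η_k − ξ_k a_j*‖² < 2δ, ‖(Σ_j a_j*a_j)ξ_k‖ ≤ 1, ‖(Σ_j a_j*a_j)η_k‖ ≤ 1, ‖(Σ_j a_j a_j*)ξ_k‖ ≤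 1, and ‖(Σ_j a_j a_j*)η_k‖ ≤ 1. -/
noncomputable section

/-- A von Neumann algebra is closed under the complex scalar action. -/
instance VonNeumannAlgebra.instSMulMemClass {H : Type*} [NormedAddCommGroup H]
    [InnerProductSpace ℂ H] [CompleteSpace H] :
    SMulMemClass (VonNeumannAlgebra H) ℂ (H →L[ℂ] H) :=
  ⟨fun {s} c _ ha => s.toStarSubalgebra.smul_mem ha c⟩

/-- An element of a `*`-ring is positive if it is of the form `star z * z`. -/
def IsPosElem {A : Type*} [Mul A] [Star A] (x : A) : Prop :=
  ∃ z : A, x = star z * z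

/-- A Hilbert bimodule over a concrete von Neumann algebra `M ⊆ B(K)`: a complex Hilbert
space `E` together with a unital `*`-homomorphism `L : M → B(E)` (the left action) and a
unital `*`-antihomomorphism `M → B(E)` (the right action, encoded as a unital
`*`-homomorphism `R` on the opposite algebra `Mᵐᵒᵖ`) with commuting ranges. -/
structure HilbertBimodule {K : Type*} [NormedAddCommGroup K] [InnerProductSpace ℂ K]
    [CompleteSpace K] (M : VonNeumannAlgebra K)
    (E : Type*) [NormedAddCommGroup E] [InnerProductSpace ℂ E] [CompleteSpace E] where
  L : M →⋆ₐ[ℂ] (E →L[ℂ] E)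
  R : (↥M)ᵐᵒᵖ →⋆ₐ[ℂ] (E →L[ℂ] E)
  commutes : ∀ (x y : M) (ξ : E),
    L x (R (MulOpposite.op y) ξ) = R (MulOpposite.op y) (L x ξ)

namespace HilbertBimodule

variable {K : Type*} [NormedAddCommGroup K] [InnerProductSpace ℂ K] [CompleteSpace K]
  {M : VonNeumannAlgebra K} {E : Type*} [NormedAddCommGroup E] [InnerProductSpace ℂ E]
  [CompleteSpace E]

/-- The left action `x ξ`. -/
def lsmul (b : HilbertBimodule M E) (x : M) (ξ : E) : E := b.L x ξ

/-- The right action `ξ x`. -/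
def rsmul (b : HilbertBimodule M E) (ξ : E) (x : M) : E := b.R (MulOpposite.op x) ξ

end HilbertBimodule

/-- Two `n`-tuples of unit vectors in a Hilbert `M`-bimodule are almost `δ`-related. -/
def HilbertBimodule.AlmostRelated {K : Type*} [NormedAddCommGroup K] [InnerProductSpace ℂ K]
    [CompleteSpace K] {M : VonNeumannAlgebra K}
    {E : Type*} [NormedAddCommGroup E] [InnerProductSpace ℂ E] [CompleteSpace E]
    (b : HilbertBimodule M E) (δ : ℝ) {n : ℕ} (ξ η : Fin n → E) : Prop :=
  ∀ ε : ℝ, 0 < ε → ∃ (p : ℕ) (a : Fin p → M), ∀ k : Fin n,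
    ‖b.lsmul (1 - ∑ j, star (a j) * a j) (ξ k)‖ < ε ∧
    ‖b.lsmul (1 - ∑ j, star (a j) * a j) (η k)‖ < ε ∧
    ‖b.rsmul (ξ k) (1 - ∑ j, star (a j) * a j)‖ < ε ∧
    ‖b.rsmul (η k) (1 - ∑ j, star (a j) * a j)‖ < ε ∧
    ‖b.lsmul (1 - ∑ j, a j * star (a j)) (ξ k)‖ < ε ∧
    ‖b.lsmul (1 - ∑ j, a j * star (a j)) (η k)‖ < ε ∧
    ‖b.rsmul (ξ k) (1 - ∑ j, a j * star (a j))‖ < ε ∧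
    ‖b.rsmul (η k) (1 - ∑ j, a j * star (a j))‖ < ε ∧
    (∑ j, ‖b.lsmul (a j) (ξ k) - b.rsmul (η k) (a j)‖ ^ 2) < δ

/-! Rescale the witnesses `a_j` by `(1 + ε')^(-1/2)` with `ε' = min ε (δ/4)`. Since
`‖(Σ a_j^* a_j) ζ‖ < 1 + ε'` on the unit vectors, the rescaled sums have norm `≤ 1` there, the
approximate-unit estimates get worse by at most `ε'`, and `Σ ‖a_j ξ - η a_j‖²` only shrinks.

For the adjoint family, with `S = Σ a_j^* a_j` and `T = Σ a_j a_j^*`, expanding the squares gives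
`Σ ‖a_j^* η - ξ a_j^*‖² = Σ ‖a_j ξ - η a_j‖² + Re (⟨Tη, η⟩ - ⟨ηT, η⟩) + Re (⟨ξS, ξ⟩ - ⟨Sξ, ξ⟩)`,
because the cross terms `⟨a_j^* η, ξ a_j^*⟩` and `⟨a_j ξ, η a_j⟩` are complex conjugates. Each
difference `⟨xζ, ζ⟩ - ⟨ζx, ζ⟩` is the inner product of `ζ(1 - x) - (1 - x)ζ` with `ζ`, hence
smaller than `2ε'`, and the adjoint sum is `< δ + 4ε' ≤ 2δ`. -/

theorem norm_lt_one_add_of_norm_sub_lt {G : Type*} [SeminormedAddCommGroup G] {u v : G} {ε : ℝ}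
    (hu : ‖u‖ ≤ 1) (h : ‖u - v‖ < ε) : ‖v‖ < 1 + ε := by
  linarith [norm_le_norm_add_norm_sub' v u, norm_sub_rev u v]

section Rescaling

variable {𝕜 F : Type*} [RCLike 𝕜] [NormedAddCommGroup F] [NormedSpace 𝕜 F]

theorem norm_sub_inv_one_add_smul_lt {u v : F} {ε : ℝ} (hu : ‖u‖ ≤ 1) (h : ‖u - v‖ < ε) :
    ‖u - (((1 + ε)⁻¹ : ℝ) : 𝕜) • v‖ < 2 * ε := by
  have hε : 0 < ε := (norm_nonneg _).trans_lt h
  have hv := norm_lt_one_add_of_norm_sub_lt hu h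
  have hc : 0 ≤ 1 - (1 + ε)⁻¹ := sub_nonneg.2 (inv_le_one_of_one_le₀ (by linarith))
  have hsplit : u - (((1 + ε)⁻¹ : ℝ) : 𝕜) • v = (u - v) + ((1 - (1 + ε)⁻¹ : ℝ) : 𝕜) • v := by
    simp only [RCLike.ofReal_sub, RCLike.ofReal_one, sub_smul, one_smul]
    abel
  calc ‖u - (((1 + ε)⁻¹ : ℝ) : 𝕜) • v‖ ≤ ‖u - v‖ + (1 - (1 + ε)⁻¹) * ‖v‖ := by
        rw [hsplit]
        refine (norm_add_le _ _).trans_eq ?_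
        rw [norm_smul, RCLike.norm_ofReal, abs_of_nonneg hc]
    _ < ε + (1 - (1 + ε)⁻¹) * (1 + ε) := add_lt_add_of_lt_of_le h (by gcongr)
    _ = 2 * ε := by field_simp; ring

theorem norm_inv_one_add_smul_le {u v : F} {ε : ℝ} (hu : ‖u‖ ≤ 1) (h : ‖u - v‖ < ε) :
    ‖(((1 + ε)⁻¹ : ℝ) : 𝕜) • v‖ ≤ 1 := by
  have hε : 0 < ε := (norm_nonneg _).trans_lt h
  rw [norm_smul, RCLike.norm_ofReal, abs_of_pos (by positivity), inv_mul_le_one₀ (by positivity)]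
  exact (norm_lt_one_add_of_norm_sub_lt hu h).le

end Rescaling

section StarAlgebra

variable {A : Type*} [Ring A] [StarRing A] [Algebra ℂ A] [StarModule ℂ A]

lemma star_ofReal_smul (t : ℝ) (x : A) : star ((t : ℂ) • x) = (t : ℂ) • star x := by
  rw [star_smul, Complex.star_def, Complex.conj_ofReal]

lemma sum_star_ofReal_smul_mul_ofReal_smul {ι : Type*} [Fintype ι] (t : ℝ) (a : ι → A) :
    ∑ j, star ((t : ℂ) • a j) * ((t : ℂ) • a j) = ((t ^ 2 : ℝ) : ℂ) • ∑ j, star (a j) * a j := by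
  simp only [star_ofReal_smul, smul_mul_smul_comm, Finset.smul_sum, sq, Complex.ofReal_mul]

lemma sum_ofReal_smul_mul_star_ofReal_smul {ι : Type*} [Fintype ι] (t : ℝ) (a : ι → A) :
    ∑ j, (t : ℂ) • a j * star ((t : ℂ) • a j) = ((t ^ 2 : ℝ) : ℂ) • ∑ j, a j * star (a j) := by
  simp only [star_ofReal_smul, smul_mul_smul_comm, Finset.smul_sum, sq, Complex.ofReal_mul]

end StarAlgebra

namespace HilbertBimodule

open RCLike MulOpposite
open scoped InnerProductSpace

variable {K : Type*} [NormedAddCommGroup K] [InnerProductSpace ℂ K] [CompleteSpace K]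
  {M : VonNeumannAlgebra K} {E : Type*} [NormedAddCommGroup E] [InnerProductSpace ℂ E]
  [CompleteSpace E] (b : HilbertBimodule M E)

lemma lsmul_one_sub (x : M) (ζ : E) : b.lsmul (1 - x) ζ = ζ - b.lsmul x ζ := by
  simp [lsmul]

lemma rsmul_one_sub (x : M) (ζ : E) : b.rsmul ζ (1 - x) = ζ - b.rsmul ζ x := by
  simp [rsmul]

lemma lsmul_smul (c : ℂ) (x : M) (ζ : E) : b.lsmul (c • x) ζ = c • b.lsmul x ζ := by
  simp [lsmul]

lemma rsmul_smul (c : ℂ) (x : M) (ζ : E) : b.rsmul ζ (c • x) = c • b.rsmul ζ x := by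
  simp [rsmul]

lemma lsmul_sum {ι : Type*} (s : Finset ι) (x : ι → M) (ζ : E) :
    b.lsmul (∑ j ∈ s, x j) ζ = ∑ j ∈ s, b.lsmul (x j) ζ := by
  simp [lsmul]

lemma rsmul_sum {ι : Type*} (s : Finset ι) (x : ι → M) (ζ : E) :
    b.rsmul ζ (∑ j ∈ s, x j) = ∑ j ∈ s, b.rsmul ζ (x j) := by
  simp [rsmul]

lemma lsmul_mul (x y : M) (ζ : E) : b.lsmul (x * y) ζ = b.lsmul x (b.lsmul y ζ) := by
  simp [lsmul]

lemma rsmul_mul (x y : M) (ζ : E) : b.rsmul ζ (x * y) = b.rsmul (b.rsmul ζ x) y := by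
  simp [rsmul]

lemma lsmul_rsmul (x y : M) (ζ : E) : b.lsmul x (b.rsmul ζ y) = b.rsmul (b.lsmul x ζ) y :=
  b.commutes x y ζ

lemma inner_lsmul_left (x : M) (ζ χ : E) : ⟪b.lsmul x ζ, χ⟫_ℂ = ⟪ζ, b.lsmul (star x) χ⟫_ℂ := by
  rw [lsmul, lsmul, map_star, ContinuousLinearMap.star_eq_adjoint,
    ContinuousLinearMap.adjoint_inner_right]

lemma inner_rsmul_left (x : M) (ζ χ : E) : ⟪b.rsmul ζ x, χ⟫_ℂ = ⟪ζ, b.rsmul χ (star x)⟫_ℂ := by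
  rw [rsmul, rsmul, op_star, map_star, ContinuousLinearMap.star_eq_adjoint,
    ContinuousLinearMap.adjoint_inner_right]

lemma norm_lsmul_sq (x : M) (ζ : E) : ‖b.lsmul x ζ‖ ^ 2 = re ⟪b.lsmul (star x * x) ζ, ζ⟫_ℂ := by
  rw [lsmul_mul, inner_lsmul_left, star_star, inner_self_eq_norm_sq]

lemma norm_rsmul_sq (x : M) (ζ : E) : ‖b.rsmul ζ x‖ ^ 2 = re ⟪b.rsmul ζ (x * star x), ζ⟫_ℂ := by
  rw [rsmul_mul, inner_rsmul_left, star_star, inner_self_eq_norm_sq]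

lemma re_inner_lsmul_star_rsmul_star (x : M) (ζ χ : E) :
    re ⟪b.lsmul (star x) χ, b.rsmul ζ (star x)⟫_ℂ = re ⟪b.lsmul x ζ, b.rsmul χ x⟫_ℂ := by
  rw [inner_lsmul_left, star_star, lsmul_rsmul, ← inner_rsmul_left, ← inner_conj_symm, conj_re]

lemma norm_lsmul_star_sub_rsmul_star_sq (x : M) (ζ χ : E) :
    ‖b.lsmul (star x) χ - b.rsmul ζ (star x)‖ ^ 2
      = ‖b.lsmul x ζ - b.rsmul χ x‖ ^ 2
        + (re ⟪b.lsmul (x * star x) χ, χ⟫_ℂ - re ⟪b.rsmul χ (x * star x), χ⟫_ℂ)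
        + (re ⟪b.rsmul ζ (star x * x), ζ⟫_ℂ - re ⟪b.lsmul (star x * x) ζ, ζ⟫_ℂ) := by
  rw [norm_sub_sq (𝕜 := ℂ), norm_sub_sq (𝕜 := ℂ), norm_lsmul_sq, norm_rsmul_sq, norm_lsmul_sq,
    norm_rsmul_sq, re_inner_lsmul_star_rsmul_star, star_star]
  ring

lemma abs_re_inner_lsmul_sub_re_inner_rsmul_le (x : M) {ζ : E} (hζ : ‖ζ‖ ≤ 1) :
    |re ⟪b.lsmul x ζ, ζ⟫_ℂ - re ⟪b.rsmul ζ x, ζ⟫_ℂ|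
      ≤ ‖b.lsmul (1 - x) ζ‖ + ‖b.rsmul ζ (1 - x)‖ := by
  have hdiff : b.lsmul x ζ - b.rsmul ζ x = b.rsmul ζ (1 - x) - b.lsmul (1 - x) ζ := by
    rw [lsmul_one_sub, rsmul_one_sub]; abel
  calc |re ⟪b.lsmul x ζ, ζ⟫_ℂ - re ⟪b.rsmul ζ x, ζ⟫_ℂ|
      = |re ⟪b.rsmul ζ (1 - x) - b.lsmul (1 - x) ζ, ζ⟫_ℂ| := by
        rw [← hdiff, inner_sub_left, map_sub]
    _ ≤ ‖b.rsmul ζ (1 - x) - b.lsmul (1 - x) ζ‖ * ‖ζ‖ :=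
        (abs_re_le_norm _).trans (norm_inner_le_norm _ _)
    _ ≤ ‖b.rsmul ζ (1 - x)‖ + ‖b.lsmul (1 - x) ζ‖ :=
        (mul_le_of_le_one_right (norm_nonneg _) hζ).trans (norm_sub_le _ _)
    _ = _ := add_comm _ _

lemma sum_norm_lsmul_star_sub_rsmul_star_sq_lt {ι : Type*} [Fintype ι] (a : ι → M) {ξ η : E}
    (hξ : ‖ξ‖ ≤ 1) (hη : ‖η‖ ≤ 1) {ε : ℝ}
    (hlS : ‖b.lsmul (1 - ∑ j, star (a j) * a j) ξ‖ < ε)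
    (hrS : ‖b.rsmul ξ (1 - ∑ j, star (a j) * a j)‖ < ε)
    (hlT : ‖b.lsmul (1 - ∑ j, a j * star (a j)) η‖ < ε)
    (hrT : ‖b.rsmul η (1 - ∑ j, a j * star (a j))‖ < ε) :
    ∑ j, ‖b.lsmul (star (a j)) η - b.rsmul ξ (star (a j))‖ ^ 2
      < ∑ j, ‖b.lsmul (a j) ξ - b.rsmul η (a j)‖ ^ 2 + 4 * ε := by
  have hS := abs_le.1 (b.abs_re_inner_lsmul_sub_re_inner_rsmul_le (∑ j, star (a j) * a j) hξ)
  have hT := abs_le.1 (b.abs_re_inner_lsmul_sub_re_inner_rsmul_le (∑ j, a j * star (a j)) hη)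
  simp only [norm_lsmul_star_sub_rsmul_star_sq, Finset.sum_add_distrib, Finset.sum_sub_distrib,
    lsmul_sum, rsmul_sum, sum_inner, map_sum] at hS hT ⊢
  linarith

lemma sum_norm_lsmul_ofReal_smul_sub_rsmul_ofReal_smul_sq {ι : Type*} [Fintype ι] (t : ℝ)
    (x : ι → M) (ξ η : E) :
    ∑ j, ‖b.lsmul ((t : ℂ) • x j) ξ - b.rsmul η ((t : ℂ) • x j)‖ ^ 2
      = t ^ 2 * ∑ j, ‖b.lsmul (x j) ξ - b.rsmul η (x j)‖ ^ 2 := by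
  simp only [lsmul_smul, rsmul_smul, ← smul_sub, norm_smul, Complex.norm_real, Real.norm_eq_abs,
    mul_pow, sq_abs, Finset.mul_sum]

lemma norm_lsmul_one_sub_inv_one_add_smul_lt {x : M} {ζ : E} {ε : ℝ} (hζ : ‖ζ‖ ≤ 1)
    (h : ‖b.lsmul (1 - x) ζ‖ < ε) : ‖b.lsmul (1 - (((1 + ε)⁻¹ : ℝ) : ℂ) • x) ζ‖ < 2 * ε := by
  rw [lsmul_one_sub] at h ⊢
  rw [lsmul_smul]
  exact norm_sub_inv_one_add_smul_lt hζ h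

lemma norm_rsmul_one_sub_inv_one_add_smul_lt {x : M} {ζ : E} {ε : ℝ} (hζ : ‖ζ‖ ≤ 1)
    (h : ‖b.rsmul ζ (1 - x)‖ < ε) : ‖b.rsmul ζ (1 - (((1 + ε)⁻¹ : ℝ) : ℂ) • x)‖ < 2 * ε := by
  rw [rsmul_one_sub] at h ⊢
  rw [rsmul_smul]
  exact norm_sub_inv_one_add_smul_lt hζ h

lemma norm_lsmul_inv_one_add_smul_le {x : M} {ζ : E} {ε : ℝ} (hζ : ‖ζ‖ ≤ 1)
    (h : ‖b.lsmul (1 - x) ζ‖ < ε) : ‖b.lsmul ((((1 + ε)⁻¹ : ℝ) : ℂ) • x) ζ‖ ≤ 1 := by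
  rw [lsmul_one_sub] at h
  rw [lsmul_smul]
  exact norm_inv_one_add_smul_le hζ h

end HilbertBimodule

theorem remark_almost2 {K : Type*} [NormedAddCommGroup K] [InnerProductSpace ℂ K]
    [CompleteSpace K] {M : VonNeumannAlgebra K}
    {E : Type*} [NormedAddCommGroup E] [InnerProductSpace ℂ E] [CompleteSpace E]
    (b : HilbertBimodule M E) {n : ℕ} (ξ η : Fin n → E)
    (hξ : ∀ k, ‖ξ k‖ = 1) (hη : ∀ k, ‖η k‖ = 1)
    (δ : ℝ) (hδ : 0 < δ) (hrel : b.AlmostRelated δ ξ η) :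
    ∀ ε : ℝ, 0 < ε → ∃ (p : ℕ) (a : Fin p → M), ∀ k : Fin n,
      ‖b.lsmul (1 - ∑ j, star (a j) * a j) (ξ k)‖ < 2 * ε ∧
      ‖b.lsmul (1 - ∑ j, star (a j) * a j) (η k)‖ < 2 * ε ∧
      ‖b.rsmul (ξ k) (1 - ∑ j, star (a j) * a j)‖ < 2 * ε ∧
      ‖b.rsmul (η k) (1 - ∑ j, star (a j) * a j)‖ < 2 * ε ∧
      ‖b.lsmul (1 - ∑ j, a j * star (a j)) (ξ k)‖ < 2 * ε ∧
      ‖b.lsmul (1 - ∑ j, a j * star (a j)) (η k)‖ < 2 * ε ∧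
      ‖b.rsmul (ξ k) (1 - ∑ j, a j * star (a j))‖ < 2 * ε ∧
      ‖b.rsmul (η k) (1 - ∑ j, a j * star (a j))‖ < 2 * ε ∧
      (∑ j, ‖b.lsmul (a j) (ξ k) - b.rsmul (η k) (a j)‖ ^ 2) < δ ∧
      (∑ j, ‖b.lsmul (star (a j)) (η k) - b.rsmul (ξ k) (star (a j))‖ ^ 2) < 2 * δ ∧
      ‖b.lsmul (∑ j, star (a j) * a j) (ξ k)‖ ≤ 1 ∧
      ‖b.lsmul (∑ j, star (a j) * a j) (η k)‖ ≤ 1 ∧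
      ‖b.lsmul (∑ j, a j * star (a j)) (ξ k)‖ ≤ 1 ∧
      ‖b.lsmul (∑ j, a j * star (a j)) (η k)‖ ≤ 1 := by
  intro ε hε
  set ε' := min ε (δ / 4)
  have hε' : 0 < ε' := lt_min hε (by positivity)
  obtain ⟨p, a, ha⟩ := hrel ε' hε'
  set c : ℝ := (1 + ε')⁻¹
  have hc : c ≤ 1 := inv_le_one_of_one_le₀ (by linarith)
  have hsqrt : √c ^ 2 = c := Real.sq_sqrt (by positivity)
  refine ⟨p, fun j => (√c : ℂ) • a j, fun k => ?_⟩
  obtain ⟨hlξS, hlηS, hrξS, hrηS, hlξT, hlηT, hrξT, hrηT, hdefect⟩ := ha k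
  have hstar := b.sum_norm_lsmul_star_sub_rsmul_star_sq_lt a (hξ k).le (hη k).le hlξS hrξS hlηT hrηT
  have h2ε : 2 * ε' ≤ 2 * ε := by grind
  have hδ' : δ + 4 * ε' ≤ 2 * δ := by grind
  have hshrink : ∀ s : ℝ, 0 ≤ s → c * s ≤ s := fun s hs => mul_le_of_le_one_left hs hc
  rw [sum_star_ofReal_smul_mul_ofReal_smul, sum_ofReal_smul_mul_star_ofReal_smul, hsqrt]
  simp only [star_ofReal_smul, b.sum_norm_lsmul_ofReal_smul_sub_rsmul_ofReal_smul_sq, hsqrt]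
  exact ⟨(b.norm_lsmul_one_sub_inv_one_add_smul_lt (hξ k).le hlξS).trans_le h2ε,
    (b.norm_lsmul_one_sub_inv_one_add_smul_lt (hη k).le hlηS).trans_le h2ε,
    (b.norm_rsmul_one_sub_inv_one_add_smul_lt (hξ k).le hrξS).trans_le h2ε,
    (b.norm_rsmul_one_sub_inv_one_add_smul_lt (hη k).le hrηS).trans_le h2ε,
    (b.norm_lsmul_one_sub_inv_one_add_smul_lt (hξ k).le hlξT).trans_le h2ε,
    (b.norm_lsmul_one_sub_inv_one_add_smul_lt (hη k).le hlηT).trans_le h2ε,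
    (b.norm_rsmul_one_sub_inv_one_add_smul_lt (hξ k).le hrξT).trans_le h2ε,
    (b.norm_rsmul_one_sub_inv_one_add_smul_lt (hη k).le hrηT).trans_le h2ε,
    (hshrink _ (Finset.sum_nonneg fun _ _ => sq_nonneg _)).trans_lt hdefect,
    (hshrink _ (Finset.sum_nonneg fun _ _ => sq_nonneg _)).trans_lt (by linarith),
    b.norm_lsmul_inv_one_add_smul_le (hξ k).le hlξS, b.norm_lsmul_inv_one_add_smul_le (hη k).le hlηS,
    b.norm_lsmul_inv_one_add_smul_le (hξ k).le hlξT, b.norm_lsmul_inv_one_add_smul_le (hη k).le hlηT⟩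
end
end

section
/- Let Γ be a multiplicative subgroup of the strictly positive reals, M a von Neumann algebra, and φ a Γ-stable faithful state on M. Let 0 < r ≤ 1 and γ_1,…,γ_n ∈ Γ with r(γ_1 + ⋯ + γ_n) = 1. Then there exists a system of matrix units (e_{jk})_{1 ≤ j,k ≤ n} in M (i.e. e_{jk}* = e_{kj}, e_{jk} e_{lm} = δ_{kl} e_{jm}, and Σ_{j=1}^n e_{jj} = 1) such that φ(e_{jk}) = δ_{jk} r γ_j and φ(e_{jk} x) = γ_j γ_k^{-1} φ(x e_{jk}) for all x ∈ M and all 1 ≤ j,k ≤ n. (Consequently, the type I_n subfactor F spanned by the e_{jk} satisfies φ|_F = Tr_n(h·) with h = diag(rγ_1,…,rγ_n), and F is globally invariant under the modular automorphism group of φ.) -/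
open scoped ComplexOrder

noncomputable section

/-- A linear map between complex `*`-algebras is completely positive if all of its
matrix amplifications map positive elements to positive elements. -/
def IsCPMap {A B : Type*} [Ring A] [StarRing A] [Algebra ℂ A]
    [Ring B] [StarRing B] [Algebra ℂ B] (Φ : A →ₗ[ℂ] B) : Prop :=
  ∀ (k : ℕ) (x : Matrix (Fin k) (Fin k) A), IsPosElem x → IsPosElem (x.map Φ)

/-- A unital completely positive map. -/
def IsUCPMap {A B : Type*} [Ring A] [StarRing A] [Algebra ℂ A]
    [Ring B] [StarRing B] [Algebra ℂ B] (Φ : A →ₗ[ℂ] B) : Prop :=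
  Φ 1 = 1 ∧ IsCPMap Φ

/-- A state on a complex `*`-algebra: unital and positive. -/
def IsState {A : Type*} [Ring A] [StarRing A] [Algebra ℂ A] (φ : A →ₗ[ℂ] ℂ) : Prop :=
  φ 1 = 1 ∧ ∀ x : A, 0 ≤ φ (star x * x)

/-- A positive linear map is faithful if `Φ (star x * x) = 0` implies `x = 0`. -/
def IsFaithfulPosMap {A B : Type*} [Ring A] [StarRing A] [Algebra ℂ A]
    [AddCommMonoid B] [Module ℂ B] (Φ : A →ₗ[ℂ] B) : Prop :=
  ∀ x : A, Φ (star x * x) = 0 → x = 0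

/-- The normalized trace `tr_m` on `m × m` complex matrices. -/
def trNorm (m : ℕ) (x : Matrix (Fin m) (Fin m) ℂ) : ℂ :=
  x.trace / (m : ℂ)

/-- `‖x‖_φ = φ(x* x)^{1/2}`. -/
def stateNorm {A : Type*} [Ring A] [StarRing A] [Algebra ℂ A]
    (φ : A →ₗ[ℂ] ℂ) (x : A) : ℝ :=
  Real.sqrt (φ (star x * x)).re

/-- `φ a = γ a φ`, i.e. `φ(ax) = γ φ(xa)` for all `x`. -/
def StateCommutes {A : Type*} [Ring A] [StarRing A] [Algebra ℂ A]
    (φ : A →ₗ[ℂ] ℂ) (γ : ℝ) (a : A) : Prop :=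
  ∀ x : A, φ (a * x) = (γ : ℂ) * φ (x * a)

/-- A projection in a `*`-ring. -/
def IsProjection {A : Type*} [Mul A] [Star A] (e : A) : Prop :=
  star e = e ∧ e * e = e

/-- `Γ`-stability of a state, for a set `Γ` of (strictly positive) reals. -/
def IsGammaStable {A : Type*} [Ring A] [StarRing A] [Algebra ℂ A]
    (Γ : Set ℝ) (φ : A →ₗ[ℂ] ℂ) : Prop :=
  ∀ (n : ℕ) (r : ℝ) (γ : Fin n → ℝ), 0 < r → r ≤ 1 → (∀ j, γ j ∈ Γ) →
    r * (∑ j, γ j) = 1 →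
    ∃ (v : Fin n → A) (e : A), IsProjection e ∧
      (∑ j, v j * star (v j)) = 1 ∧ φ e = (r : ℂ) ∧
      (∀ j, star (v j) * v j = e) ∧ ∀ j, StateCommutes φ (γ j) (v j)

/-- The multiplicative group of strictly positive rationals, as a set of reals. -/
def QPos : Set ℝ := {x : ℝ | ∃ q : ℚ, 0 < q ∧ (q : ℝ) = x}

/-!
Stability yields partial isometries `v j` with common source projection `e`, range projections
summing to `1`, and `φ (v j) = γ j (v j) φ`. Faithfulness of `φ` forces `v j * e = v j` and makes
the range projections pairwise orthogonal, so `e j k = v j * star (v k)` are matrix units. A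
positive functional is hermitian, hence `φ (star (v k)) = (γ k)⁻¹ (star (v k)) φ`, and composing
the two commutation rules gives the modular behaviour of `e j k`.
-/
theorem IsProjection.mul_star_self {A : Type*} [Semigroup A] [StarMul A] {v e : A}
    (hv : star v * v = e) (hve : v * e = v) : IsProjection (v * star v) := by
  refine ⟨by rw [star_mul, star_star], ?_⟩
  rw [mul_assoc, ← mul_assoc (star v), hv, ← mul_assoc, hve]

theorem mul_star_mul_mul_star_eq_ite {A : Type*} [Semiring A] [StarMul A] {ι : Type*}
    [DecidableEq ι] {v : ι → A} {e : A} (hve : ∀ j, v j * e = v j)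
    (hvv : ∀ j k, star (v j) * v k = if j = k then e else 0) (j k l m : ι) :
    v j * star (v k) * (v l * star (v m)) = if k = l then v j * star (v m) else 0 := by
  rw [mul_assoc, ← mul_assoc (star (v k)), hvv]
  split_ifs
  · rw [← mul_assoc, hve]
  · rw [zero_mul, mul_zero]

section PositiveFunctional

variable {A : Type*} [Ring A] [StarRing A] [Algebra ℂ A] {φ : A →ₗ[ℂ] ℂ}

theorem im_map_star_mul_self_eq_zero (hpos : ∀ x : A, 0 ≤ φ (star x * x)) (x : A) :
    (φ (star x * x)).im = 0 :=
  (Complex.le_def.mp (hpos x)).2.symm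

theorem im_map_eq_zero_of_isSelfAdjoint (hpos : ∀ x : A, 0 ≤ φ (star x * x)) {h : A}
    (hh : IsSelfAdjoint h) : (φ h).im = 0 := by
  have hdecomp : (2 : ℂ) • h = star (1 + h) * (1 + h) - star 1 * 1 - star h * h := by
    rw [star_add, star_one, hh.star_eq, two_smul]
    noncomm_ring
  have := congrArg (fun y => (φ y).im) hdecomp
  simp only [map_sub, map_smul, smul_eq_mul, Complex.sub_im, im_map_star_mul_self_eq_zero hpos,
    Complex.mul_im] at this
  simpa using this

open ComplexStarModule in
theorem map_star_of_nonneg [StarModule ℂ A] (hpos : ∀ x : A, 0 ≤ φ (star x * x)) (x : A) :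
    φ (star x) = starRingEnd ℂ (φ x) := by
  have hre := Complex.conj_eq_iff_im.mpr (im_map_eq_zero_of_isSelfAdjoint hpos (ℜ x).2)
  have him := Complex.conj_eq_iff_im.mpr (im_map_eq_zero_of_isSelfAdjoint hpos (ℑ x).2)
  rw [← realPart_add_I_smul_imaginaryPart x]
  simp only [star_add, star_smul, (ℜ x).2.star_eq, (ℑ x).2.star_eq, map_add, map_smul,
    smul_eq_mul, map_mul, hre, him, Complex.star_def, Complex.conj_I]

theorem StateCommutes.mul {a b : ℝ} {x y : A} (hx : StateCommutes φ a x)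
    (hy : StateCommutes φ b y) : StateCommutes φ (a * b) (x * y) := by
  intro z
  rw [mul_assoc, hx, mul_assoc, hy, ← mul_assoc z]
  push_cast
  ring

theorem StateCommutes.star [StarModule ℂ A] (hpos : ∀ x : A, 0 ≤ φ (star x * x)) {γ : ℝ}
    (hγ : γ ≠ 0) {v : A} (hv : StateCommutes φ γ v) : StateCommutes φ γ⁻¹ (star v) := by
  intro x
  have hvx : φ (Star.star x * v) = (γ : ℂ)⁻¹ * φ (v * Star.star x) := by
    rw [hv, inv_mul_cancel_left₀ (by exact_mod_cast hγ)]
  calc φ (Star.star v * x) = starRingEnd ℂ (φ (Star.star x * v)) := by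
        rw [← map_star_of_nonneg hpos, star_mul, star_star]
    _ = (γ⁻¹ : ℝ) * φ (x * Star.star v) := by
        rw [hvx, map_mul, ← map_star_of_nonneg hpos, star_mul, star_star, map_inv₀,
          Complex.conj_ofReal, Complex.ofReal_inv]

theorem IsFaithfulPosMap.mul_eq_self_of_star_mul_self_eq (hf : IsFaithfulPosMap φ) {v e : A}
    (he : IsProjection e) (hv : star v * v = e) : v * e = v := by
  have hzero : star (v - v * e) * (v - v * e) = 0 := by
    have hexp : star (v - v * e) * (v - v * e)
        = star v * v - star v * v * e - e * (star v * v) + e * (star v * v) * e := by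
      rw [star_sub, star_mul, he.1]
      noncomm_ring
    rw [hexp, hv]
    simp only [he.2, sub_self, sub_add_cancel]
  exact (sub_eq_zero.mp (hf _ (by rw [hzero, map_zero]))).symm

/-- The terms `p k * p i * p k = star (p i * p k) * (p i * p k)`, `i ≠ k`, have positive images
under `φ` and sum to `p k * (1 - p k) * p k = 0`. -/
theorem IsFaithfulPosMap.mul_eq_zero_of_sum_eq_one (hpos : ∀ x : A, 0 ≤ φ (star x * x))
    (hf : IsFaithfulPosMap φ) {ι : Type*} [Fintype ι] [DecidableEq ι] {p : ι → A}
    (hp : ∀ i, IsProjection (p i)) (hsum : ∑ i, p i = 1) {j k : ι} (hjk : j ≠ k) :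
    p j * p k = 0 := by
  have hsq : ∀ i, star (p i * p k) * (p i * p k) = p k * p i * p k := fun i => by
    rw [star_mul, (hp k).1, (hp i).1, mul_assoc, ← mul_assoc (p i), (hp i).2, ← mul_assoc]
  have hrest : ∑ i ∈ Finset.univ.erase k, p i = 1 - p k := by
    rw [eq_sub_iff_add_eq, Finset.sum_erase_add _ _ (Finset.mem_univ k), hsum]
  have hzero : ∑ i ∈ Finset.univ.erase k, φ (p k * p i * p k) = 0 := by
    rw [← map_sum, ← Finset.sum_mul, ← Finset.mul_sum, hrest, mul_sub, mul_one, (hp k).2, sub_self, zero_mul, map_zero]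
  have hterm := (Finset.sum_eq_zero_iff_of_nonneg fun i _ => hsq i ▸ hpos (p i * p k)).mp hzero j
    (Finset.mem_erase.mpr ⟨hjk, Finset.mem_univ j⟩)
  exact hf _ (by rw [hsq, hterm])

theorem IsFaithfulPosMap.star_mul_eq_ite (hpos : ∀ x : A, 0 ≤ φ (star x * x))
    (hf : IsFaithfulPosMap φ) {ι : Type*} [Fintype ι] [DecidableEq ι] {v : ι → A} {e : A}
    (he : IsProjection e) (hv : ∀ j, star (v j) * v j = e) (hsum : ∑ j, v j * star (v j) = 1)
    (j k : ι) : star (v j) * v k = if j = k then e else 0 := by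
  have hve : ∀ j, v j * e = v j := fun j => hf.mul_eq_self_of_star_mul_self_eq he (hv j)
  split_ifs with hjk
  · rw [hjk, hv]
  have hrange := hf.mul_eq_zero_of_sum_eq_one hpos
    (fun i => IsProjection.mul_star_self (hv i) (hve i)) hsum hjk
  have hev : e * star (v j) = star (v j) := by
    rw [← he.1, ← star_mul, hve]
  calc star (v j) * v k = e * star (v j) * (v k * e) := by rw [hev, hve]
    _ = star (v j) * (v j * star (v j) * (v k * star (v k))) * v k := by
        nth_rw 1 [← hv j]
        rw [← hv k]
        noncomm_ring
    _ = 0 := by rw [hrange, mul_zero, zero_mul]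

end PositiveFunctional

theorem lemma_matrix_units_general {H : Type*} [NormedAddCommGroup H]
    [InnerProductSpace ℂ H] [CompleteSpace H]
    (Γ : Set ℝ)
    -- `Γ` is a multiplicative subgroup of the strictly positive reals
    (hΓpos : ∀ γ ∈ Γ, (0 : ℝ) < γ)
    (M : VonNeumannAlgebra H) (φ : M →ₗ[ℂ] ℂ) (hφ : IsState φ) (hφf : IsFaithfulPosMap φ)
    (hstable : IsGammaStable Γ φ)
    (n : ℕ) (r : ℝ) (γ : Fin n → ℝ) (hr0 : 0 < r) (hr1 : r ≤ 1)
    (hγ : ∀ j, γ j ∈ Γ) (hsum : r * (∑ j, γ j) = 1) :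
    ∃ e : Fin n → Fin n → M,
      (∀ j k, star (e j k) = e k j) ∧
      (∀ j k l m, e j k * e l m = if k = l then e j m else 0) ∧
      (∑ j, e j j) = 1 ∧
      (∀ j k, φ (e j k) = if j = k then ((r * γ j : ℝ) : ℂ) else 0) ∧
      ∀ j k, StateCommutes φ (γ j / γ k) (e j k) := by
  obtain ⟨v, e, he, hvsum, hφe, hv, hcomm⟩ := hstable n r γ hr0 hr1 hγ hsum
  have hve : ∀ j, v j * e = v j := fun j => hφf.mul_eq_self_of_star_mul_self_eq he (hv j)
  have hvv := hφf.star_mul_eq_ite hφ.2 he hv hvsum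
  refine ⟨fun j k => v j * star (v k), fun j k => by rw [star_mul, star_star],
    mul_star_mul_mul_star_eq_ite hve hvv, hvsum, fun j k => ?_, fun j k => ?_⟩
  · rw [hcomm j, hvv]
    obtain rfl | hjk := eq_or_ne j k
    · rw [if_pos rfl, if_pos rfl, hφe]
      push_cast
      ring
    · rw [if_neg hjk.symm, if_neg hjk, map_zero, mul_zero]
  · exact div_eq_mul_inv (γ j) (γ k) ▸ (hcomm j).mul ((hcomm k).star hφ.2 (hΓpos _ (hγ k)).ne')

theorem lemma_matrix_units {H : Type*} [NormedAddCommGroup H]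
    [InnerProductSpace ℂ H] [CompleteSpace H]
    (Γ : Set ℝ)
    -- `Γ` is a multiplicative subgroup of the strictly positive reals
    (hΓpos : ∀ γ ∈ Γ, (0 : ℝ) < γ) (hΓone : (1 : ℝ) ∈ Γ)
    (hΓmul : ∀ γ ∈ Γ, ∀ γ' ∈ Γ, γ * γ' ∈ Γ) (hΓinv : ∀ γ ∈ Γ, γ⁻¹ ∈ Γ)
    (M : VonNeumannAlgebra H) (φ : M →ₗ[ℂ] ℂ) (hφ : IsState φ) (hφf : IsFaithfulPosMap φ)
    (hstable : IsGammaStable Γ φ)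
    (n : ℕ) (r : ℝ) (γ : Fin n → ℝ) (hr0 : 0 < r) (hr1 : r ≤ 1)
    (hγ : ∀ j, γ j ∈ Γ) (hsum : r * (∑ j, γ j) = 1) :
    ∃ e : Fin n → Fin n → M,
      (∀ j k, star (e j k) = e k j) ∧
      (∀ j k l m, e j k * e l m = if k = l then e j m else 0) ∧
      (∑ j, e j j) = 1 ∧
      (∀ j k, φ (e j k) = if j = k then ((r * γ j : ℝ) : ℂ) else 0) ∧
      ∀ j k, StateCommutes φ (γ j / γ k) (e j k) :=
  lemma_matrix_units_general Γ hΓpos M φ hφ hφf hstable n r γ hr0 hr1 hγ hsum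
end
end
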